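/- Let f : E → F be a smooth map between Banach spaces of the form f(x) = f(0) + D·x + N(x), where D : E → F is a bounded linear operator admitting a bounded right inverse G : F → E (so D ∘ G = Id_F), and the nonlinear part satisfies ‖G(N(x)) − G(N(y))‖ ≤ C(‖x‖ + ‖y‖)·‖x − y‖ for all x, y in the ball B_ε(0), where ε ≤ 1/(4C). If ‖G(f(0))‖ ≤ ε/2, then there exists a unique x₀ ∈ B_ε(0) ∩ G(F) with f(x₀) = 0, and it satisfies ‖x₀‖ ≤ ε. -/

import Mathlib

/-!
Zeros of `f` in the range of `G` are exactly the fixed points of `T x = -G (f 0) - G (N x)`,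
since `D ∘ G = id`. The quadratic bound on `G ∘ N` makes `T` a `2Cε`-, hence `1/2`-Lipschitz map on
`B_ε(0)`, and `‖T 0‖ = ‖G (f 0)‖ ≤ ε/2` then keeps the ball invariant, so the Banach fixed point
theorem applies.
-/

open Metric Set Function
open scoped NNReal

theorem LipschitzOnWith.existsUnique_isFixedPt {α : Type*} [MetricSpace α] {K : ℝ≥0}
    {f : α → α} {s : Set α} (hf : LipschitzOnWith K f s) (hK : K < 1) (hsc : IsComplete s)
    (hsf : MapsTo f s s) (hs : s.Nonempty) :
    ∃! x, x ∈ s ∧ IsFixedPt f x := by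
  have hc : ContractingWith K (hsf.restrict f s s) := ⟨hK, hf.mapsToRestrict hsf⟩
  obtain ⟨x, hxs⟩ := hs
  obtain ⟨y, hys, hy, -⟩ := hc.exists_fixedPoint' hsc hsf hxs (edist_ne_top _ _)
  refine ⟨y, ⟨hys, hy⟩, fun z ⟨hzs, hz⟩ => ?_⟩
  exact congrArg Subtype.val <|
    hc.fixedPoint_unique' (x := ⟨z, hzs⟩) (y := ⟨y, hys⟩) (Subtype.ext hz) (Subtype.ext hy)

theorem LipschitzOnWith.mapsTo_closedBall {α : Type*} [PseudoMetricSpace α] {K : ℝ≥0}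
    {f : α → α} {c : α} {r : ℝ} (hf : LipschitzOnWith K f (closedBall c r))
    (hc : dist (f c) c ≤ (1 - K) * r) :
    MapsTo f (closedBall c r) (closedBall c r) := by
  intro x hx
  have hr : 0 ≤ r := nonempty_closedBall.mp ⟨x, hx⟩
  calc dist (f x) c ≤ dist (f x) (f c) + dist (f c) c := dist_triangle _ _ _
    _ ≤ K * dist x c + (1 - K) * r := add_le_add (hf.dist_le_mul x hx c (mem_closedBall_self hr)) hc
    _ ≤ K * r + (1 - K) * r := by gcongr; exact hx
    _ = r := by ring

theorem lipschitzOnWith_closedBall_of_norm_sub_le {E E' : Type*} [SeminormedAddCommGroup E]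
    [SeminormedAddCommGroup E'] {g : E → E'} {C ε : ℝ} {K : ℝ≥0} (hC : 0 ≤ C)
    (hK : 2 * C * ε ≤ K)
    (hg : ∀ x ∈ closedBall (0 : E) ε, ∀ y ∈ closedBall (0 : E) ε,
      ‖g x - g y‖ ≤ C * (‖x‖ + ‖y‖) * ‖x - y‖) :
    LipschitzOnWith K g (closedBall 0 ε) := by
  refine LipschitzOnWith.of_dist_le_mul fun x hx y hy => ?_
  rw [mem_closedBall_zero_iff] at hx hy
  rw [dist_eq_norm, dist_eq_norm]
  calc ‖g x - g y‖ ≤ C * (‖x‖ + ‖y‖) * ‖x - y‖ := hg x (by simpa) y (by simpa)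
    _ ≤ C * (ε + ε) * ‖x - y‖ := by gcongr
    _ ≤ K * ‖x - y‖ := by gcongr; linarith

theorem mem_range_and_eq_zero_iff_isFixedPt {𝕜 E F : Type*} [Semiring 𝕜]
    [AddCommGroup E] [Module 𝕜 E] [TopologicalSpace E]
    [AddCommGroup F] [Module 𝕜 F] [TopologicalSpace F]
    {f N : E → F} {D : E →L[𝕜] F} {G : F →L[𝕜] E}
    (hDG : ∀ y, D (G y) = y) (hN : ∀ x, N x = f x - f 0 - D x) {x : E} :
    (x ∈ range G ∧ f x = 0) ↔ IsFixedPt (fun x => -G (f 0) - G (N x)) x := by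
  constructor
  · rintro ⟨⟨y, rfl⟩, hfx⟩
    simp only [IsFixedPt, hN, hfx, hDG, map_sub, map_zero]
    abel
  · intro hx
    have hGx : G (-f 0 - N x) = x := by rw [map_sub, map_neg]; exact hx
    have hDx : D x = -f 0 - N x := by simpa only [hGx] using hDG (-f 0 - N x)
    refine ⟨⟨_, hGx⟩, ?_⟩
    have hNx := hN x
    rw [hDx] at hNx
    grind

theorem stmt_1_general {E F : Type*} [NormedAddCommGroup E] [NormedSpace ℝ E] [CompleteSpace E]
    [NormedAddCommGroup F] [NormedSpace ℝ F]
    (f : E → F)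
    (D : E →L[ℝ] F) (G : F →L[ℝ] E) (hDG : ∀ y, D (G y) = y)
    (N : E → F) (hN : ∀ x, N x = f x - f 0 - D x)
    (C ε : ℝ) (hε : 0 < ε) (hεC : ε ≤ 1 / (4 * C))
    (hcontr : ∀ x ∈ closedBall (0 : E) ε, ∀ y ∈ closedBall (0 : E) ε,
      ‖G (N x) - G (N y)‖ ≤ C * (‖x‖ + ‖y‖) * ‖x - y‖)
    (hinit : ‖G (f 0)‖ ≤ ε / 2) :
    ∃! x₀ : E, (x₀ ∈ closedBall (0 : E) ε ∩ Set.range G ∧ f x₀ = 0) ∧ ‖x₀‖ ≤ ε := by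
  set T : E → E := fun x => -G (f 0) - G (N x)
  have hC : 0 < C := by
    have := hε.trans_le hεC
    rw [one_div_pos] at this
    linarith
  have hGN : LipschitzOnWith (1 / 2) (fun x => G (N x)) (closedBall 0 ε) := by
    refine lipschitzOnWith_closedBall_of_norm_sub_le hC.le ?_ hcontr
    rw [le_div_iff₀ (by positivity)] at hεC
    push_cast
    linarith
  have hT : LipschitzOnWith (1 / 2) T (closedBall 0 ε) :=
    LipschitzOnWith.of_dist_le_mul fun x hx y hy => by
      simpa only [T, dist_sub_left] using hGN.dist_le_mul x hx y hy
  have hT0 : dist (T 0) 0 ≤ (1 - ((1 / 2 : ℝ≥0) : ℝ)) * ε := by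
    simp only [T, hN, sub_self, map_zero, sub_zero, dist_zero_right, norm_neg]
    push_cast
    linarith
  obtain ⟨x₀, ⟨hx₀, hfix⟩, huniq⟩ := hT.existsUnique_isFixedPt (by norm_num)
    isClosed_closedBall.isComplete (hT.mapsTo_closedBall hT0) ⟨0, mem_closedBall_self hε.le⟩
  have hzero {x : E} := mem_range_and_eq_zero_iff_isFixedPt (x := x) hDG hN
  refine ⟨x₀, ⟨⟨⟨hx₀, (hzero.2 hfix).1⟩, (hzero.2 hfix).2⟩, mem_closedBall_zero_iff.1 hx₀⟩, ?_⟩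
  rintro x ⟨⟨⟨hx, hxG⟩, hfx⟩, -⟩
  exact huniq x ⟨hx, hzero.1 ⟨hxG, hfx⟩⟩

/-- Contraction-principle solution of `f(x) = 0` near `0` for a map
`f(x) = f(0) + D x + N(x)` with right-inverted linear part. -/
theorem stmt_1 {E F : Type*} [NormedAddCommGroup E] [NormedSpace ℝ E] [CompleteSpace E]
    [NormedAddCommGroup F] [NormedSpace ℝ F] [CompleteSpace F]
    (f : E → F) (hf : Continuous f)
    (D : E →L[ℝ] F) (G : F →L[ℝ] E) (hDG : ∀ y, D (G y) = y)
    (N : E → F) (hN : ∀ x, N x = f x - f 0 - D x)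
    (C ε : ℝ) (hC : 0 < C) (hε : 0 < ε) (hεC : ε ≤ 1 / (4 * C))
    (hcontr : ∀ x ∈ closedBall (0 : E) ε, ∀ y ∈ closedBall (0 : E) ε,
      ‖G (N x) - G (N y)‖ ≤ C * (‖x‖ + ‖y‖) * ‖x - y‖)
    (hinit : ‖G (f 0)‖ ≤ ε / 2) :
    ∃! x₀ : E, (x₀ ∈ closedBall (0 : E) ε ∩ Set.range G ∧ f x₀ = 0) ∧ ‖x₀‖ ≤ ε :=
  stmt_1_general f D G hDG N hN C ε hε hεC hcontr hinit
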